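/- arXiv:2507.03512 — 2 statements merged into one kernel-verified Lean document; each statement's English description precedes it below -/
import Mathlib

section
/- Fix p_S ∈ [0, 1/2], let S := H(p_S), and set x := √(1 − (1 − 2p_S)²). Then the weights ω with ω₀ = ω₃ = (1 + x)/4 and ω₁ = ω₂ = (1 − x)/4 are nonnegative, sum to 1, satisfy S(ω) = S, and attain Q(ω) = 8(1 + x); moreover Q(ω') ≤ 8(1 + x) for every admissible weight vector ω' with S(ω') = S. (Equivalently, |ψ^o(S)⟩ = √((1+x)/4)(|00⟩+|11⟩) + √((1−x)/4)(|01⟩+|10⟩) is an optimal probe at fixed entanglement entropy S.) -/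
/-- Quantum Fisher information `Q(ω) = 16(ω₀+ω₃) − 16(ω₃−ω₀)²` of the two-qubit probe
`|ψ⟩ = Σ_p √ω_p |p⟩` under the generator `h = σ_z⊗I + I⊗σ_z`. -/
noncomputable def QFI (ω : Fin 4 → ℝ) : ℝ :=
  16 * (ω 0 + ω 3) - 16 * (ω 3 - ω 0) ^ 2

/-- Generalized geometric measure of entanglement
`g(ω) = (1 − √(1 − 4(√(ω₁ω₂) − √(ω₀ω₃))²))/2`. -/
noncomputable def GGM (ω : Fin 4 → ℝ) : ℝ :=
  (1 - Real.sqrt (1 - 4 * (Real.sqrt (ω 1 * ω 2) - Real.sqrt (ω 0 * ω 3)) ^ 2)) / 2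

/-- Binary entropy `H(p) = −p log₂ p − (1−p) log₂ (1−p)` (with `0 log₂ 0 = 0`,
which holds automatically since `Real.logb 2 0 = 0`). -/
noncomputable def binEnt (p : ℝ) : ℝ :=
  -(p * Real.logb 2 p) - (1 - p) * Real.logb 2 (1 - p)

/-- Von Neumann entanglement entropy of the probe, `S(ω) = H(g(ω))`. -/
noncomputable def entEntropy (ω : Fin 4 → ℝ) : ℝ :=
  binEnt (GGM ω)

/-! Fixing the entanglement entropy fixes the concurrence: `g = (1 − √(1 − C²))/2` with
`C = 2|√(ω₁ω₂) − √(ω₀ω₃)| ∈ [0, 1]`, and `H` is injective on `[0, 1/2]`, so `S(ω') = H(p_S)` forces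
`C(ω') = x`. On the other hand `Q(ω) ≤ 8(1 + C(ω))` for every admissible `ω`, with equality for the
symmetric probe. -/

lemma binEnt_eq_binEntropy_div_log_two (p : ℝ) : binEnt p = Real.binEntropy p / Real.log 2 := by
  simp only [binEnt, Real.binEntropy, Real.logb, Real.log_inv]
  ring

lemma binEnt_injOn : Set.InjOn binEnt (Set.Icc 0 (1 / 2)) := by
  intro p hp q hq h
  rw [binEnt_eq_binEntropy_div_log_two, binEnt_eq_binEntropy_div_log_two,
    div_left_inj' (Real.log_pos one_lt_two).ne'] at h
  exact Real.binEntropy_strictMonoOn.injOn (by simpa using hp) (by simpa using hq) h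

lemma Real.sqrt_mul_le_add_div_two {a b : ℝ} (ha : 0 ≤ a) (hb : 0 ≤ b) :
    √(a * b) ≤ (a + b) / 2 :=
  Real.sqrt_le_iff.mpr ⟨by positivity, by nlinarith [sq_nonneg (a - b)]⟩

/-- For the probe `Σ_p √ω_p |p⟩` this is the Wootters concurrence `2|c₀₀c₁₁ − c₀₁c₁₀|`. -/
noncomputable def concurrence (ω : Fin 4 → ℝ) : ℝ :=
  2 * |√(ω 1 * ω 2) - √(ω 0 * ω 3)|

lemma concurrence_nonneg (ω : Fin 4 → ℝ) : 0 ≤ concurrence ω := by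
  unfold concurrence
  positivity

lemma GGM_eq (ω : Fin 4 → ℝ) : GGM ω = (1 - √(1 - concurrence ω ^ 2)) / 2 := by
  rw [GGM, concurrence, mul_pow, sq_abs]
  norm_num

lemma GGM_mem_Icc (ω : Fin 4 → ℝ) : GGM ω ∈ Set.Icc 0 (1 / 2) := by
  have h₀ : 0 ≤ √(1 - concurrence ω ^ 2) := Real.sqrt_nonneg _
  have h₁ : √(1 - concurrence ω ^ 2) ≤ 1 := Real.sqrt_le_one.mpr (by nlinarith)
  rw [GGM_eq]
  constructor <;> linarith

section Admissible

variable {ω : Fin 4 → ℝ} (hω : ∀ p, 0 ≤ ω p) (hsum : ∑ p, ω p = 1)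
include hω hsum

lemma concurrence_le_one : concurrence ω ≤ 1 := by
  rw [Fin.sum_univ_four] at hsum
  have h₁₂ := Real.sqrt_mul_le_add_div_two (hω 1) (hω 2)
  have h₀₃ := Real.sqrt_mul_le_add_div_two (hω 0) (hω 3)
  have := Real.sqrt_nonneg (ω 1 * ω 2)
  have := Real.sqrt_nonneg (ω 0 * ω 3)
  have h : |√(ω 1 * ω 2) - √(ω 0 * ω 3)| ≤ 1 / 2 :=
    abs_sub_le_iff.mpr ⟨by linarith [hω 0, hω 3], by linarith [hω 1, hω 2]⟩
  rw [concurrence]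
  linarith

lemma GGM_eq_iff {p : ℝ} (hp : p ∈ Set.Icc 0 (1 / 2)) :
    GGM ω = p ↔ concurrence ω = √(1 - (1 - 2 * p) ^ 2) := by
  have hC₀ := concurrence_nonneg ω
  have hC₁ := concurrence_le_one hω hsum
  obtain ⟨hp₀, hp₁⟩ := hp
  calc GGM ω = p ↔ √(1 - concurrence ω ^ 2) = 1 - 2 * p := by
        rw [GGM_eq]; constructor <;> intro h <;> linarith
    _ ↔ 1 - concurrence ω ^ 2 = (1 - 2 * p) ^ 2 :=
        Real.sqrt_eq_iff_eq_sq (by nlinarith) (by linarith)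
    _ ↔ concurrence ω ^ 2 = 1 - (1 - 2 * p) ^ 2 := by constructor <;> intro h <;> linarith
    _ ↔ concurrence ω = √(1 - (1 - 2 * p) ^ 2) :=
        ⟨fun h ↦ by rw [← h, Real.sqrt_sq hC₀], fun h ↦ by rw [h, Real.sq_sqrt (by nlinarith)]⟩

/-- With `a = ω₀ + ω₃` one has `Q = 16a − 16a² + 64ω₀ω₃`, and `√(ω₀ω₃)` is bounded both by
`a/2` (AM–GM) and by `√(ω₁ω₂) + C/2 ≤ (1 − a + C)/2`; the resulting bound on `Q` is
maximal at `a = (1 + C)/2`. -/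
lemma QFI_le_eight_mul_one_add_concurrence : QFI ω ≤ 8 * (1 + concurrence ω) := by
  rw [Fin.sum_univ_four] at hsum
  set a := ω 0 + ω 3
  set c := concurrence ω / 2
  set u := √(ω 0 * ω 3)
  have hu₀ : 0 ≤ u := Real.sqrt_nonneg _
  have hc₀ : 0 ≤ c := div_nonneg (concurrence_nonneg ω) zero_le_two
  have hu_le_a : u ≤ a / 2 := Real.sqrt_mul_le_add_div_two (hω 0) (hω 3)
  have hu_le_c : u ≤ (1 - a) / 2 + c := by
    have h₁₂ := Real.sqrt_mul_le_add_div_two (hω 1) (hω 2)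
    have h := neg_abs_le (√(ω 1 * ω 2) - u)
    unfold c concurrence
    linarith
  have hQFI : QFI ω = 16 * a - 16 * a ^ 2 + 64 * u ^ 2 := by
    rw [QFI, Real.sq_sqrt (mul_nonneg (hω 0) (hω 3))]
    ring
  rw [hQFI, show concurrence ω = 2 * c by unfold c; ring]
  rcases le_or_gt a ((1 + 2 * c) / 2) with ha_le | ha_gt
  · nlinarith [mul_self_le_mul_self hu₀ hu_le_a]
  · nlinarith [mul_self_le_mul_self hu₀ hu_le_c]

end Admissible

section SymmetricProbe

variable (x : ℝ)

lemma sum_symmetricProbe :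
    ∑ p, ![(1 + x) / 4, (1 - x) / 4, (1 - x) / 4, (1 + x) / 4] p = 1 := by
  simp only [Fin.sum_univ_four, Matrix.cons_val]
  ring

lemma QFI_symmetricProbe :
    QFI ![(1 + x) / 4, (1 - x) / 4, (1 - x) / 4, (1 + x) / 4] = 8 * (1 + x) := by
  simp only [QFI, Matrix.cons_val]
  ring

variable {x} (hx₀ : 0 ≤ x) (hx₁ : x ≤ 1)
include hx₀ hx₁

lemma symmetricProbe_nonneg (p : Fin 4) :
    0 ≤ ![(1 + x) / 4, (1 - x) / 4, (1 - x) / 4, (1 + x) / 4] p := by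
  fin_cases p <;> simp <;> linarith

lemma concurrence_symmetricProbe :
    concurrence ![(1 + x) / 4, (1 - x) / 4, (1 - x) / 4, (1 + x) / 4] = x := by
  simp only [concurrence, Matrix.cons_val]
  rw [Real.sqrt_mul_self (by linarith), Real.sqrt_mul_self (by linarith),
    show (1 - x) / 4 - (1 + x) / 4 = -(x / 2) by ring, abs_neg, abs_of_nonneg (by linarith)]
  ring

end SymmetricProbe

/-- For `p_S ∈ [0, 1/2]`, `S = H(p_S)` and `x = √(1 − (1 − 2p_S)²)`, the weights
`ω₀ = ω₃ = (1+x)/4`, `ω₁ = ω₂ = (1−x)/4` are admissible, have entanglement entropy `S`,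
attain `Q(ω) = 8(1+x)`, and no admissible weight vector with entropy `S` does better. -/
theorem optimal_probe_fixed_entropy_two_qubits (pS S x : ℝ)
    (hpS : pS ∈ Set.Icc (0 : ℝ) (1 / 2)) (hS : S = binEnt pS)
    (hx : x = Real.sqrt (1 - (1 - 2 * pS) ^ 2)) (ω : Fin 4 → ℝ)
    (hω : ω = ![(1 + x) / 4, (1 - x) / 4, (1 - x) / 4, (1 + x) / 4]) :
    (∀ p, 0 ≤ ω p) ∧ (∑ p, ω p) = 1 ∧ entEntropy ω = S ∧ QFI ω = 8 * (1 + x) ∧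
      ∀ ω' : Fin 4 → ℝ, (∀ p, 0 ≤ ω' p) → (∑ p, ω' p) = 1 → entEntropy ω' = S →
        QFI ω' ≤ 8 * (1 + x) := by
  have hx₀ : 0 ≤ x := hx ▸ Real.sqrt_nonneg _
  have hx₁ : x ≤ 1 := hx ▸ Real.sqrt_le_one.mpr (by nlinarith)
  subst hω
  have hnonneg := symmetricProbe_nonneg hx₀ hx₁
  have hGGM : GGM ![(1 + x) / 4, (1 - x) / 4, (1 - x) / 4, (1 + x) / 4] = pS :=
    (GGM_eq_iff hnonneg (sum_symmetricProbe x) hpS).mpr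
      ((concurrence_symmetricProbe hx₀ hx₁).trans hx)
  refine ⟨hnonneg, sum_symmetricProbe x, by rw [entEntropy, hGGM, hS], QFI_symmetricProbe x, ?_⟩
  intro ω' hω'₀ hω'₁ hent
  have hGGM' : GGM ω' = pS := binEnt_injOn (GGM_mem_Icc ω') hpS (hent.trans hS)
  calc QFI ω' ≤ 8 * (1 + concurrence ω') := QFI_le_eight_mul_one_add_concurrence hω'₀ hω'₁
    _ = 8 * (1 + x) := by rw [(GGM_eq_iff hω'₀ hω'₁ hpS).mp hGGM', hx]
end

section
/- Fix G ∈ (0, 1/2) and set x := √(1 − (1 − 2G)²). If ω lies in the probability simplex with ω₃ = 0 (or symmetrically ω₀ = 0), ω₁ = ω₂, and g(ω) = G, then Q(ω) = 16(x − x²) = 16(√(1 − (1 − 2G)²) − (1 − (1 − 2G)²)), and this value is strictly less than the interior optimum 8(1 + x). Hence no such boundary state attains the entanglement-constrained maximum of the quantum Fisher information. -/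
/-!
On the boundary `ω₀ω₃ = 0` with `ω₁ = ω₂ = a`, the measure reduces to `g = (1 − √(1 − 4a²))/2`,
so `g = G` forces `2a = x`. The remaining weight `1 − x` sits on a single one of `|00⟩, |11⟩`, and
`Q = 16 s(1 − s)` at `s = 1 − x`, i.e. `16(x − x²)`. This lies below `8(1 + x)` because
`2x² − x + 1` has negative discriminant.
-/

lemma QFI_eq (ω : Fin 4 → ℝ) :
    QFI ω = 16 * ((ω 0 + ω 3) - (ω 0 + ω 3) ^ 2) + 64 * (ω 0 * ω 3) := by
  rw [QFI]; ring

lemma GGM_of_mul_eq_zero {ω : Fin 4 → ℝ} (h03 : ω 0 * ω 3 = 0) (h12 : 0 ≤ ω 1 * ω 2) :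
    GGM ω = (1 - Real.sqrt (1 - 4 * (ω 1 * ω 2))) / 2 := by
  rw [GGM, h03, Real.sqrt_zero, sub_zero, Real.sq_sqrt h12]

lemma four_mul_eq_of_GGM_eq {ω : Fin 4 → ℝ} {G : ℝ} (h03 : ω 0 * ω 3 = 0)
    (h12 : 0 ≤ ω 1 * ω 2) (hG : G < 1 / 2) (hg : GGM ω = G) :
    4 * (ω 1 * ω 2) = 1 - (1 - 2 * G) ^ 2 := by
  rw [GGM_of_mul_eq_zero h03 h12] at hg
  have hsqrt : Real.sqrt (1 - 4 * (ω 1 * ω 2)) = 1 - 2 * G := by linarith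
  rw [Real.sqrt_eq_iff_mul_self_eq_of_pos (by linarith)] at hsqrt
  linear_combination hsqrt

lemma sixteen_mul_sub_sq_lt (x : ℝ) : 16 * (x - x ^ 2) < 8 * (1 + x) := by
  nlinarith [sq_nonneg (4 * x - 1)]

/-- For `G ∈ (0, 1/2)` and `x = √(1 − (1 − 2G)²)`, any simplex point with
`ω₃ = 0` (or symmetrically `ω₀ = 0`), `ω₁ = ω₂`, and GGM `G` has
`Q(ω) = 16(x − x²)`, strictly less than the interior optimum `8(1 + x)`. -/
theorem boundary_w3_zero_suboptimal (G x : ℝ) (hG : G ∈ Set.Ioo (0 : ℝ) (1 / 2))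
    (hx : x = Real.sqrt (1 - (1 - 2 * G) ^ 2)) (ω : Fin 4 → ℝ) (hpos : ∀ p, 0 ≤ ω p)
    (hsum : (∑ p, ω p) = 1) (hzero : ω 3 = 0 ∨ ω 0 = 0) (h12 : ω 1 = ω 2)
    (hg : GGM ω = G) :
    QFI ω = 16 * (x - x ^ 2) ∧
    QFI ω = 16 * (Real.sqrt (1 - (1 - 2 * G) ^ 2) - (1 - (1 - 2 * G) ^ 2)) ∧
    QFI ω < 8 * (1 + x) := by
  have h03 : ω 0 * ω 3 = 0 := by rcases hzero with h | h <;> simp [h]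
  have hw12 : 0 ≤ ω 1 * ω 2 := mul_nonneg (hpos 1) (hpos 2)
  have hwG := four_mul_eq_of_GGM_eq h03 hw12 hG.2 hg
  have hx1 : x = 2 * ω 1 := by
    rw [hx, ← hwG, ← h12, show 4 * (ω 1 * ω 1) = (2 * ω 1) ^ 2 by ring]
    exact Real.sqrt_sq (by linarith [hpos 1])
  have hs : ω 0 + ω 3 = 1 - x := by
    rw [Fin.sum_univ_four] at hsum
    linarith
  have hQ : QFI ω = 16 * (x - x ^ 2) := by
    rw [QFI_eq, h03, hs]; ring
  refine ⟨hQ, ?_, hQ ▸ sixteen_mul_sub_sq_lt x⟩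
  rw [hQ, ← hx, ← hwG, hx1, h12]
  ring
end
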